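/- arXiv:2412.03638 — 4 statements merged into one kernel-verified Lean document; each statement's English description precedes it below -/
import Mathlib

section
/- In the symmetric group S_8, the subgroup generated by the 3-cycles (1 5 4), (2 6 5), (2 3 5), and (5 8 7) is the alternating group A_8. -/
/-!
A subgroup `H` of `Perm α` containing the 3-cycles `(a b k)` for fixed `a`, `b` and all `k`
contains `swap x y * swap a b` for all `x ≠ y`, since `swap x y` is the conjugate of `swap a x`
by `swap a y`. Every 3-cycle is a product of two overlapping transpositions, hence a quotient of
two such elements, so `H` contains all 3-cycles and thus the alternating group. For the four
vacancy 3-cycles, the 3-cycles through the first two points are explicit short words in the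
generators.
-/

open Equiv Equiv.Perm Subgroup

namespace Equiv.Perm

variable {α : Type*} [DecidableEq α] {H : Subgroup (Perm α)} {a b : α}

theorem swap_mul_swap_mem_of_forall_swap_mul_swap_mem
    (h : ∀ k, k ≠ a → swap a k * swap a b ∈ H) {x y : α} (hxy : x ≠ y) :
    swap x y * swap a b ∈ H := by
  rcases eq_or_ne x a with rfl | hx
  · exact h y hxy.symm
  rcases eq_or_ne y a with rfl | hy
  · exact swap_comm x y ▸ h x hxy
  have hconj : swap x y * swap a b =
      (swap a y * swap a b) * (swap a x * swap a b)⁻¹ * (swap a y * swap a b) := by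
    rw [← swap_comm y x, ← swap_mul_swap_mul_swap hx hxy, swap_comm x a]
    simp only [mul_inv_rev, swap_inv, mul_assoc, swap_mul_self_mul]
  rw [hconj]
  exact mul_mem (mul_mem (h y hy) (inv_mem (h x hx))) (h y hy)

variable [Fintype α]

theorem IsThreeCycle.mem_of_forall_swap_mul_swap_mem
    (h : ∀ k, k ≠ a → swap a k * swap a b ∈ H) {g : Perm α} (hg : g.IsThreeCycle) :
    g ∈ H := by
  obtain ⟨p, hp⟩ := hg.isCycle.nonempty_support
  have hnodup := hg.nodup_iff_mem_support.2 hp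
  simp only [List.nodup_cons, List.mem_cons, List.not_mem_nil, not_or] at hnodup
  have hprod : swap p (g p) * swap (g p) (g (g p)) =
      (swap p (g p) * swap a b) * (swap (g p) (g (g p)) * swap a b)⁻¹ := by
    simp only [mul_inv_rev, swap_inv, mul_assoc, swap_mul_self_mul]
  rw [hg.eq_swap_mul_swap_iff_mem_support.2 hp, hprod]
  exact mul_mem (swap_mul_swap_mem_of_forall_swap_mul_swap_mem h hnodup.1.1)
    (inv_mem (swap_mul_swap_mem_of_forall_swap_mul_swap_mem h hnodup.2.1.1))

theorem alternatingGroup_le_of_forall_swap_mul_swap_mem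
    (h : ∀ k, k ≠ a → swap a k * swap a b ∈ H) : alternatingGroup α ≤ H := by
  rw [← closure_three_cycles_eq_alternating, closure_le]
  exact fun g hg ↦ hg.mem_of_forall_swap_mul_swap_mem h

end Equiv.Perm

theorem swap_zero_mul_swap_zero_one_mem {H : Subgroup (Perm (Fin 8))}
    (h₁ : swap 0 3 * swap 0 4 ∈ H) (h₂ : swap 1 4 * swap 1 5 ∈ H)
    (h₃ : swap 1 4 * swap 1 2 ∈ H) (h₄ : swap 4 6 * swap 4 7 ∈ H) :
    ∀ k, k ≠ 0 → swap 0 k * swap 0 1 ∈ H := by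
  -- `swap 0 k * swap 0 1` is the 3-cycle `(0 1 k)`; each is a conjugate of a generator, except
  -- `(0 1 4) = (0 4 3)⁻¹ * (0 1 3)`.
  intro k hk
  fin_cases k <;> simp only [Fin.reduceFinMk, Fin.isValue] at hk ⊢
  · exact absurd rfl hk
  · simp
  · rw [show swap (0 : Fin 8) 2 * swap 0 1 =
      (swap 0 3 * swap 0 4)⁻¹ * (swap 1 4 * swap 1 2) * (swap 0 3 * swap 0 4) by decide]
    exact mul_mem (mul_mem (inv_mem h₁) h₃) h₁
  · rw [show swap (0 : Fin 8) 3 * swap 0 1 =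
      (swap 1 4 * swap 1 5) * (swap 0 3 * swap 0 4) * (swap 1 4 * swap 1 5)⁻¹ by decide]
    exact mul_mem (mul_mem h₂ h₁) (inv_mem h₂)
  · rw [show swap (0 : Fin 8) 4 * swap 0 1 =
      (swap 0 3 * swap 0 4)⁻¹ * (swap 1 4 * swap 1 5) * (swap 0 3 * swap 0 4) *
        (swap 1 4 * swap 1 5)⁻¹ by decide]
    exact mul_mem (mul_mem (mul_mem (inv_mem h₁) h₂) h₁) (inv_mem h₂)
  · rw [show swap (0 : Fin 8) 5 * swap 0 1 =
      (swap 0 3 * swap 0 4)⁻¹ * (swap 1 4 * swap 1 5) * (swap 0 3 * swap 0 4) by decide]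
    exact mul_mem (mul_mem (inv_mem h₁) h₂) h₁
  · rw [show swap (0 : Fin 8) 6 * swap 0 1 =
      (swap 1 4 * swap 1 5) * (swap 4 6 * swap 4 7)⁻¹ * (swap 0 3 * swap 0 4)⁻¹ *
        (swap 4 6 * swap 4 7) * (swap 0 3 * swap 0 4) * (swap 1 4 * swap 1 5)⁻¹ by decide]
    exact mul_mem (mul_mem (mul_mem (mul_mem (mul_mem h₂ (inv_mem h₄)) (inv_mem h₁)) h₄) h₁)
      (inv_mem h₂)
  · rw [show swap (0 : Fin 8) 7 * swap 0 1 =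
      (swap 1 4 * swap 1 5) * (swap 4 6 * swap 4 7) * (swap 0 3 * swap 0 4)⁻¹ *
        (swap 4 6 * swap 4 7)⁻¹ * (swap 0 3 * swap 0 4) * (swap 1 4 * swap 1 5)⁻¹ by decide]
    exact mul_mem (mul_mem (mul_mem (mul_mem (mul_mem h₂ h₄) (inv_mem h₁)) (inv_mem h₄)) h₁)
      (inv_mem h₂)

open Equiv in
/-- In `S_8`, the subgroup generated by the 3-cycles
`(1 5 4)`, `(2 6 5)`, `(2 3 5)`, `(5 8 7)` is the alternating group `A_8`.
We index `{1,…,8}` by `Fin 8 = {0,…,7}`; a 3-cycle `(a b c)` (mapping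
`a ↦ b ↦ c ↦ a`) is written as `swap a c * swap a b`. -/
theorem closure_vacancy_three_cycles_eq_alternating :
    Subgroup.closure
        ({swap (0 : Fin 8) 3 * swap 0 4,   -- (1 5 4)
          swap (1 : Fin 8) 4 * swap 1 5,   -- (2 6 5)
          swap (1 : Fin 8) 4 * swap 1 2,   -- (2 3 5)
          swap (4 : Fin 8) 6 * swap 4 7}   -- (5 8 7)
          : Set (Equiv.Perm (Fin 8))) = alternatingGroup (Fin 8) := by
  refine le_antisymm ((closure_le _).2 ?_) (alternatingGroup_le_of_forall_swap_mul_swap_mem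
    (swap_zero_mul_swap_zero_one_mem (subset_closure (by simp)) (subset_closure (by simp))
      (subset_closure (by simp)) (subset_closure (by simp))))
  simp only [Set.insert_subset_iff, Set.singleton_subset_iff, SetLike.mem_coe]
  refine ⟨?_, ?_, ?_, ?_⟩ <;>
    exact IsThreeCycle.mem_alternatingGroup
      (isThreeCycle_swap_mul_swap_same (by decide) (by decide) (by decide))
end

section
/- Let M be a real symmetric N×N matrix with nonpositive off-diagonal entries, and let ψ ∈ ℝ^N. Define ψ_F ∈ ℝ^N by grouping coordinates: suppose the index set is a product I × S and (ψ_F)_{I} = sqrt(Σ_σ ψ_{(I,σ)}²) with the S-coordinate collapsed. If the off-diagonal structure satisfies M_{(I',σ'),(I,σ)} = -t·A_F(I',I)·δ(σ', f_{I'I}(σ)) with t ≥ 0, A_F(I',I) ∈ {0,1}, and f_{I'I} : S → S a function, then ⟨ψ, Mψ⟩ ≥ -t Σ_{I,I'} A_F(I',I)·(ψ_F)_{I'}·(ψ_F)_I. -/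
/-!
Expanding the quadratic form, each pair `(i', i)` contributes
`-t A i' i ∑_σ ψ(i', f σ) ψ(i, σ)`. By Cauchy–Schwarz this inner sum is at most
`√(∑_σ ψ(i', f σ)²) √(∑_σ ψ(i, σ)²)`, and since `f` is injective the first sum is a subsum
of `∑_σ ψ(i', σ)²`. As `t A i' i ≥ 0`, the bound follows.
-/

open Finset

section

variable {S : Type*} [Fintype S]

theorem Fintype.sum_comp_le_sum_of_injective {α : Type*} [Fintype α] {g : α → S}
    (hg : Function.Injective g) {w : S → ℝ} (hw : ∀ σ, 0 ≤ w σ) :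
    ∑ a, w (g a) ≤ ∑ σ, w σ :=
  calc ∑ a, w (g a) = ∑ σ ∈ univ.map ⟨g, hg⟩, w σ := (sum_map univ ⟨g, hg⟩ w).symm
    _ ≤ ∑ σ, w σ := sum_le_sum_of_subset_of_nonneg (subset_univ _) fun σ _ _ => hw σ

theorem sum_comp_mul_le_sqrt_mul_sqrt {α : Type*} [Fintype α] {g : α → S}
    (hg : Function.Injective g) (u : S → ℝ) (v : α → ℝ) :
    ∑ a, u (g a) * v a ≤ √(∑ σ, u σ ^ 2) * √(∑ a, v a ^ 2) :=
  calc ∑ a, u (g a) * v a ≤ √(∑ a, u (g a) ^ 2) * √(∑ a, v a ^ 2) :=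
        Real.sum_mul_le_sqrt_mul_sqrt _ _ _
    _ ≤ √(∑ σ, u σ ^ 2) * √(∑ a, v a ^ 2) := by
        gcongr ?_ * _
        exact Real.sqrt_le_sqrt <|
          Fintype.sum_comp_le_sum_of_injective hg fun σ => sq_nonneg (u σ)

end

theorem quadForm_eq_of_transition {I S : Type*} [Fintype I] [Fintype S] [DecidableEq S]
    (c : I → I → ℝ) (f : I → I → S → S) (M : Matrix (I × S) (I × S) ℝ)
    (hM : ∀ i' σ' i σ, M (i', σ') (i, σ) = c i' i * if σ' = f i' i σ then 1 else 0)
    (ψ : I × S → ℝ) :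
    ∑ p : I × S, ∑ q : I × S, ψ p * M p q * ψ q
      = ∑ i', ∑ i, c i' i * ∑ σ, ψ (i', f i' i σ) * ψ (i, σ) := by
  simp only [Fintype.sum_prod_type, hM]
  refine sum_congr rfl fun i' _ => ?_
  rw [sum_comm]
  refine sum_congr rfl fun i _ => ?_
  rw [sum_comm, mul_sum]
  refine sum_congr rfl fun σ _ => ?_
  simp only [mul_ite, ite_mul, mul_zero, zero_mul, mul_one, sum_ite_eq', mem_univ, if_true]
  ring

open Finset in
/-- Cauchy–Schwarz step: Let `M` be a real matrix indexed by
`I × S` with `M (i',σ') (i,σ) = -t · A i' i · δ(σ', f i' i σ)` where `t ≥ 0`,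
`A i' i ∈ {0,1}`, and each `f i' i : S → S` is a (injective, since at most one
final spin pattern connects each pair of states) function. Then the quadratic
form `⟨ψ, Mψ⟩` is bounded below by
`-t Σ_{I,I'} A(I',I) (ψ_F)_{I'} (ψ_F)_I`, where `(ψ_F)_I = √(Σ_σ ψ(I,σ)²)`. -/
theorem cauchy_schwarz_ferro_bound (I S : Type*) [Fintype I] [Fintype S]
    [DecidableEq S]
    (t : ℝ) (ht : 0 ≤ t) (A : I → I → ℝ)
    (hA : ∀ i' i, A i' i = 0 ∨ A i' i = 1)
    (f : I → I → S → S) (hf : ∀ i' i, Function.Injective (f i' i))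
    (M : Matrix (I × S) (I × S) ℝ)
    (hM : ∀ i' σ' i σ, M (i', σ') (i, σ) =
      -t * A i' i * (if σ' = f i' i σ then 1 else 0))
    (ψ : I × S → ℝ) :
    -t * ∑ i' : I, ∑ i : I, A i' i *
        Real.sqrt (∑ σ : S, ψ (i', σ) ^ 2) * Real.sqrt (∑ σ : S, ψ (i, σ) ^ 2)
      ≤ ∑ p : I × S, ∑ q : I × S, ψ p * M p q * ψ q := by
  have hA_nonneg : ∀ i' i, 0 ≤ A i' i := fun i' i => by rcases hA i' i with h | h <;> simp [h]
  rw [quadForm_eq_of_transition (fun i' i => -t * A i' i) f M hM ψ]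
  simp only [mul_assoc, ← mul_sum]
  refine mul_le_mul_of_nonpos_left ?_ (neg_nonpos.mpr ht)
  refine sum_le_sum fun i' _ => sum_le_sum fun i _ => mul_le_mul_of_nonneg_left ?_ (hA_nonneg i' i)
  exact sum_comp_mul_le_sqrt_mul_sqrt (hf i' i) (fun σ => ψ (i', σ)) (fun σ => ψ (i, σ))
end

section
/- Define a dynamics on labelled electron-vacancy configurations on a lattice where each elementary move is a transposition of one electron with one adjacent vacancy, and where each vacancy i carries a signed 1D displacement d_i along its line. Then the quantity I = sgn(Π)·(-1)^{Σ_i d_i}, where Π is the permutation of all particles relative to the initial configuration, is invariant under the dynamics. -/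
open Equiv Function

theorem Finset.sum_update_add {ι M : Type*} [Fintype ι] [DecidableEq ι] [AddCommMonoid M]
    (f : ι → M) (i : ι) (ε : M) : ∑ j, update f i (f i + ε) j = ∑ j, f j + ε := by
  rw [Finset.sum_update_of_mem (Finset.mem_univ i),
    Finset.sum_eq_add_sum_sdiff_singleton_of_mem (Finset.mem_univ i) f]
  abel

theorem Int.negOnePow_add_of_odd (n : ℤ) {ε : ℤ} (hε : Odd ε) :
    (n + ε).negOnePow = -n.negOnePow := by
  rw [Int.negOnePow_add, Int.negOnePow_odd ε hε, mul_neg_one]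

theorem Equiv.Perm.sign_swap_mul {α : Type*} [Fintype α] [DecidableEq α] {a b : α}
    (hab : a ≠ b) (σ : Perm α) : Perm.sign (swap a b * σ) = -Perm.sign σ := by
  rw [map_mul, Perm.sign_swap hab, neg_one_mul]

theorem sign_mul_negOnePow_sum_swap_update {α : Type*} [Fintype α] [DecidableEq α]
    (σ : Perm α) (d : α → ℤ) {a b : α} (hab : a ≠ b) (c : α) {ε : ℤ} (hε : Odd ε) :
    Perm.sign (swap a b * σ) * (∑ i, update d c (d c + ε) i).negOnePow =
      Perm.sign σ * (∑ i, d i).negOnePow := by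
  rw [Perm.sign_swap_mul hab, Finset.sum_update_add, Int.negOnePow_add_of_odd _ hε,
    neg_mul_neg]

theorem electron_vacancy_invariant_general (N : ℕ)
    (Elec Vac : Finset (Fin N)) (hdisj : Disjoint Elec Vac)
    (Step : (Equiv.Perm (Fin N) × (Fin N → ℤ)) →
            (Equiv.Perm (Fin N) × (Fin N → ℤ)) → Prop)
    (hStep : ∀ s s', Step s s' ↔
      ∃ a ∈ Elec, ∃ b ∈ Vac, ∃ ε : ℤ, (ε = 1 ∨ ε = -1) ∧
        s'.1 = Equiv.swap a b * s.1 ∧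
        s'.2 = Function.update s.2 b (s.2 b + ε)) :
    (∀ s s', Step s s' →
      (Equiv.Perm.sign s'.1) * Int.negOnePow (∑ i : Fin N, s'.2 i) =
      (Equiv.Perm.sign s.1) * Int.negOnePow (∑ i : Fin N, s.2 i)) ∧
    (∀ s, Relation.ReflTransGen Step (1, fun _ => 0) s →
      (Equiv.Perm.sign s.1) * Int.negOnePow (∑ i : Fin N, s.2 i) = 1) := by
  have step_invariant : ∀ s s', Step s s' →
      (Equiv.Perm.sign s'.1) * Int.negOnePow (∑ i : Fin N, s'.2 i) =
      (Equiv.Perm.sign s.1) * Int.negOnePow (∑ i : Fin N, s.2 i) := by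
    rintro ⟨σ, d⟩ ⟨σ', d'⟩ h
    obtain ⟨a, ha, b, hb, ε, hε, rfl, rfl⟩ := (hStep _ _).mp h
    have hab : a ≠ b := fun h => Finset.disjoint_left.mp hdisj ha (h ▸ hb)
    have hε_odd : Odd ε := by rcases hε with rfl | rfl <;> decide
    exact sign_mul_negOnePow_sum_swap_update σ d hab b hε_odd
  refine ⟨step_invariant, fun s hs => ?_⟩
  induction hs with
  | refl => simp
  | tail _ hstep ih => rw [step_invariant _ _ hstep, ih]

/-- Dynamics on labelled electron–vacancy configurations. A state
is a pair `(Φ, dvec)` of the permutation of all `N` particle labels relative to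
the initial configuration together with the signed 1D displacement of each
vacancy along its line. An elementary move transposes one electron label with
one vacancy label and changes that vacancy's displacement by `±1`. Then
`I = sgn(Φ) · (-1)^{Σ_i d_i}` is invariant under the dynamics; since initially
`Φ = id` and `d ≡ 0`, every reachable state has `I = 1`. -/
theorem electron_vacancy_invariant (N : ℕ)
    (Elec Vac : Finset (Fin N)) (hdisj : Disjoint Elec Vac)
    (hcover : Elec ∪ Vac = Finset.univ)
    (Step : (Equiv.Perm (Fin N) × (Fin N → ℤ)) →
            (Equiv.Perm (Fin N) × (Fin N → ℤ)) → Prop)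
    (hStep : ∀ s s', Step s s' ↔
      ∃ a ∈ Elec, ∃ b ∈ Vac, ∃ ε : ℤ, (ε = 1 ∨ ε = -1) ∧
        s'.1 = Equiv.swap a b * s.1 ∧
        s'.2 = Function.update s.2 b (s.2 b + ε)) :
    (∀ s s', Step s s' →
      (Equiv.Perm.sign s'.1) * Int.negOnePow (∑ i : Fin N, s'.2 i) =
      (Equiv.Perm.sign s.1) * Int.negOnePow (∑ i : Fin N, s.2 i)) ∧
    (∀ s, Relation.ReflTransGen Step (1, fun _ => 0) s →
      (Equiv.Perm.sign s.1) * Int.negOnePow (∑ i : Fin N, s.2 i) = 1) :=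
  electron_vacancy_invariant_general N Elec Vac hdisj Step hStep
end

section
/- Suppose on each line of length L around a periodic boundary, the m vacancies on it can only undergo cyclic permutations, each cyclic permutation of the m vacancies contributing a sign factor (-1)^{m+1}, while the accompanying total displacement contributes (-1)^L. If L - m is odd (so (-1)^{L-m-1} = 1), then the combined factor from any cyclic permutation is +1, and hence the invariant I = sgn(Π)·(-1)^{Σ d_i} = 1 forces the electron permutation π to be even. -/
/-!
Each cyclic permutation of the `m` vacancies on a line comes with a full traversal of the
line, so together they contribute `(-1)^(m+1) · (-1)^L = (-1)^(L-m-1)`, which is `1` when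
`L - m` is odd. Hence the vacancy part drops out of the invariant `sgn(π·π_v)·(-1)^(Σ d_i)`,
leaving `sgn π = 1`.
-/

theorem Nat.even_succ_add_of_odd_sub {L m : ℕ} (h : Odd (L - m)) : Even (m + 1 + L) := by
  obtain ⟨t, ht⟩ := h
  exact ⟨m + t + 1, by omega⟩

theorem neg_one_pow_succ_pow_mul_negOnePow_mul_eq_one {L m : ℕ} (k : ℕ) (h : Odd (L - m)) :
    ((-1 : ℤˣ) ^ (m + 1)) ^ k * Int.negOnePow (k * L) = 1 := by
  have hcast : (k : ℤ) * L = ((k * L : ℕ) : ℤ) := by push_cast; ring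
  have hexp : (m + 1) * k + k * L = k * (m + 1 + L) := by ring
  rw [Int.negOnePow_def, hcast, zpow_natCast, ← pow_mul, ← pow_add, hexp]
  exact ((Nat.even_succ_add_of_odd_sub h).mul_left k).neg_one_pow

theorem Equiv.Perm.sign_eq_one_of_sign_mul_mul_eq_one {α : Type*} [Fintype α] [DecidableEq α]
    {π σ : Perm α} {ε : ℤˣ} (h : sign (π * σ) * ε = 1) (hσ : sign σ * ε = 1) :
    sign π = 1 := by
  rwa [map_mul, mul_assoc, hσ, mul_one] at h

theorem pbc_electron_permutation_even_general (N L m k : ℕ)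
    (hodd : Odd (L - m))
    (Φ π πv : Equiv.Perm (Fin N)) (d : Fin N → ℤ)
    (hsign_v : Equiv.Perm.sign πv = ((-1 : ℤˣ) ^ (m + 1)) ^ k)
    (hdisp : (∑ i : Fin N, d i) = (k : ℤ) * (L : ℤ))
    (hdecomp : Φ = π * πv)
    (hinv : (Equiv.Perm.sign Φ) * Int.negOnePow (∑ i : Fin N, d i) = 1) :
    Equiv.Perm.sign π = 1 := by
  subst hdecomp
  refine Equiv.Perm.sign_eq_one_of_sign_mul_mul_eq_one hinv ?_
  rw [hsign_v, hdisp]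
  exact neg_one_pow_succ_pow_mul_negOnePow_mul_eq_one k hodd

/-- PBC evenness of ring exchange: On periodic lines of length
`L`, the vacancy permutation `π_v` consists of `k` cyclic permutations of the
`m` vacancies on a line, each contributing a sign `(-1)^{m+1}`, while each
accompanying full traversal contributes displacement sum `L`
(so `Σ d_i = k·L`). If `L - m` is odd (so `(-1)^{L-m-1} = 1`), then the
invariant `I = sgn(Φ)·(-1)^{Σ d_i} = 1` forces the electron permutation `π`
to be even. -/
theorem pbc_electron_permutation_even (N L m k : ℕ) (hm : m ≤ L)
    (hodd : Odd (L - m))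
    (Φ π πv : Equiv.Perm (Fin N)) (d : Fin N → ℤ)
    (hsign_v : Equiv.Perm.sign πv = ((-1 : ℤˣ) ^ (m + 1)) ^ k)
    (hdisp : (∑ i : Fin N, d i) = (k : ℤ) * (L : ℤ))
    (hdecomp : Φ = π * πv)
    (hinv : (Equiv.Perm.sign Φ) * Int.negOnePow (∑ i : Fin N, d i) = 1) :
    Equiv.Perm.sign π = 1 :=
  pbc_electron_permutation_even_general N L m k hodd Φ π πv d hsign_v hdisp hdecomp hinv
end
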